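/- arXiv:1710.00904 — 7 statements merged into one kernel-verified Lean document; each statement's English description precedes it below -/
import Mathlib

section
/- Let β⁽¹⁾, …, β⁽ᵐ⁾ ∈ ℝ^p and β* ∈ ℝ^p, let ε ≥ 0, and set m̃ = ⌊m/2⌋ + 1. Suppose at least m̃ indices i satisfy ‖β⁽ⁱ⁾ − β*‖₂ ≤ ε. Let p ∈ {1,…,m} be a pivot index, meaning: for every i ∈ {1,…,m} and every t ∈ ℝ, if at least m̃ indices j satisfy ‖β⁽ⁱ⁾ − β⁽ʲ⁾‖₂ ≤ t, then at least m̃ indices j satisfy ‖β⁽ᵖ⁾ − β⁽ʲ⁾‖₂ ≤ t. Then at least m̃ indices j ∈ {1,…,m} satisfy ‖β⁽ᵖ⁾ − β⁽ʲ⁾‖₂ ≤ 2ε (that is, σ_m̃(d⁽ᵖ⁾) ≤ 2ε). -/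
/-- Lemma 2: if at least `m̃ = ⌊m/2⌋ + 1` estimates are ε-accurate and `piv` is a
pivot index (minimizing `σ_m̃` of the distance vector), then at least `m̃` indices j
satisfy `‖β⁽ᵖ⁾ − β⁽ʲ⁾‖₂ ≤ 2ε`, i.e. `σ_m̃(d⁽ᵖ⁾) ≤ 2ε`. -/
theorem lemma2_pivot (m n : ℕ) (β : Fin m → EuclideanSpace ℝ (Fin n))
    (βstar : EuclideanSpace ℝ (Fin n)) (ε : ℝ) (hε : 0 ≤ ε)
    (hacc : m / 2 + 1 ≤ (Finset.univ.filter (fun i => ‖β i - βstar‖ ≤ ε)).card)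
    (piv : Fin m)
    (hpiv : ∀ (i : Fin m) (t : ℝ),
      m / 2 + 1 ≤ (Finset.univ.filter (fun j => ‖β i - β j‖ ≤ t)).card →
      m / 2 + 1 ≤ (Finset.univ.filter (fun j => ‖β piv - β j‖ ≤ t)).card) :
    m / 2 + 1 ≤ (Finset.univ.filter (fun j => ‖β piv - β j‖ ≤ 2 * ε)).card := by
  obtain ⟨i, hi⟩ : ∃ i, i ∈ Finset.univ.filter (fun i => ‖β i - βstar‖ ≤ ε) := by
    apply Finset.card_pos.mp
    omega
  rw [Finset.mem_filter] at hi
  apply hpiv i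
  refine le_trans hacc (Finset.card_le_card ?_)
  intro j hj
  rw [Finset.mem_filter] at hj ⊢
  refine ⟨Finset.mem_univ _, ?_⟩
  calc ‖β i - β j‖ = ‖(β i - βstar) + (βstar - β j)‖ := by rw [sub_add_sub_cancel]
    _ ≤ ‖β i - βstar‖ + ‖βstar - β j‖ := norm_add_le _ _
    _ ≤ ε + ε := add_le_add hi.2 (by rw [norm_sub_rev]; exact hj.2)
    _ = 2 * ε := by ring
end

section
/- Let Ψ be a nonempty finite index set with |Ψ| = m̃, let β⁽ⁱ⁾ ∈ ℝ^p for each i ∈ Ψ, let β* ∈ ℝ^p, and let ε ≥ 0. Suppose there exists k ∈ Ψ such that ‖β⁽ᵏ⁾ − β*‖₂ ≤ ε and ‖β⁽ᵏ⁾ − β⁽ⁱ⁾‖₂ ≤ 2ε for every i ∈ Ψ. If β̂ ∈ ℝ^p is a robust consolidation of {β⁽ⁱ⁾ : i ∈ Ψ}, i.e. Σ_{i∈Ψ} ‖β⁽ⁱ⁾ − β̂‖₂ ≤ Σ_{i∈Ψ} ‖β⁽ⁱ⁾ − β‖₂ for every β ∈ ℝ^p, then ‖β̂ − β*‖₂ ≤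 5ε. -/
/-! Comparing the consolidation `β̂` with the good estimate `β⁽ᵏ⁾` through each `β⁽ⁱ⁾`, the triangle
inequality and minimality give `|Ψ| ‖β̂ − β⁽ᵏ⁾‖ ≤ 2 Σᵢ ‖β⁽ⁱ⁾ − β⁽ᵏ⁾‖ ≤ 4 |Ψ| ε`, so `β̂` is within `4ε`
of `β⁽ᵏ⁾` and hence within `5ε` of `β*`. -/

section GeometricMedian

variable {α ι : Type*} [PseudoMetricSpace α] {s : Finset ι} {x : ι → α} {m c : α}

theorem card_mul_dist_le_two_mul_sum_dist
    (hmin : ∑ i ∈ s, dist (x i) m ≤ ∑ i ∈ s, dist (x i) c) :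
    s.card * dist m c ≤ 2 * ∑ i ∈ s, dist (x i) c :=
  calc s.card * dist m c = ∑ _i ∈ s, dist m c := by rw [Finset.sum_const, nsmul_eq_mul]
    _ ≤ ∑ i ∈ s, (dist (x i) m + dist (x i) c) :=
        Finset.sum_le_sum fun i _ => dist_triangle_left m c (x i)
    _ = ∑ i ∈ s, dist (x i) m + ∑ i ∈ s, dist (x i) c := Finset.sum_add_distrib
    _ ≤ 2 * ∑ i ∈ s, dist (x i) c := by linarith

theorem dist_le_two_mul_of_sum_dist_le {r : ℝ} (hs : s.Nonempty)
    (hmin : ∑ i ∈ s, dist (x i) m ≤ ∑ i ∈ s, dist (x i) c)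
    (hc : ∀ i ∈ s, dist (x i) c ≤ r) :
    dist m c ≤ 2 * r := by
  have hcard : (0 : ℝ) < s.card := by exact_mod_cast hs.card_pos
  have hsum : ∑ i ∈ s, dist (x i) c ≤ s.card * r := by
    simpa only [Finset.sum_const, nsmul_eq_mul] using Finset.sum_le_sum hc
  refine le_of_mul_le_mul_left ?_ hcard
  nlinarith [card_mul_dist_le_two_mul_sum_dist hmin]

end GeometricMedian

theorem drlr_recovery_general {ι : Type*} (Ψ : Finset ι)
    (hne : Ψ.Nonempty)
    {n : ℕ} (β : ι → EuclideanSpace ℝ (Fin n))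
    (βstar βhat : EuclideanSpace ℝ (Fin n)) (ε : ℝ)
    (hk : ∃ k ∈ Ψ, ‖β k - βstar‖ ≤ ε ∧ ∀ i ∈ Ψ, ‖β k - β i‖ ≤ 2 * ε)
    (hmin : ∀ b : EuclideanSpace ℝ (Fin n),
      ∑ i ∈ Ψ, ‖β i - βhat‖ ≤ ∑ i ∈ Ψ, ‖β i - b‖) :
    ‖βhat - βstar‖ ≤ 5 * ε := by
  obtain ⟨k, -, hk_accurate, hk_close⟩ := hk
  have hhat : dist βhat (β k) ≤ 2 * (2 * ε) :=
    dist_le_two_mul_of_sum_dist_le hne (by simpa only [dist_eq_norm] using hmin (β k))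
      fun i hi => by rw [dist_comm, dist_eq_norm]; exact hk_close i hi
  calc ‖βhat - βstar‖ = dist βhat βstar := (dist_eq_norm _ _).symm
    _ ≤ dist βhat (β k) + dist (β k) βstar := dist_triangle _ _ _
    _ ≤ 5 * ε := by rw [dist_eq_norm (β k)]; linarith

/-- Theorem 2 (DRLR recovery property): if some `k ∈ Ψ` is ε-accurate and within
2ε of every estimate in the dominating set `Ψ` (of size mt), then the robust
consolidation `β̂` of `{β⁽ⁱ⁾ : i ∈ Ψ}` satisfies `‖β̂ − β*‖₂ ≤ 5ε`. -/
theorem drlr_recovery {ι : Type*} (Ψ : Finset ι) (mt : ℕ)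
    (hcard : Ψ.card = mt) (hne : Ψ.Nonempty)
    {n : ℕ} (β : ι → EuclideanSpace ℝ (Fin n))
    (βstar βhat : EuclideanSpace ℝ (Fin n)) (ε : ℝ) (hε : 0 ≤ ε)
    (hk : ∃ k ∈ Ψ, ‖β k - βstar‖ ≤ ε ∧ ∀ i ∈ Ψ, ‖β k - β i‖ ≤ 2 * ε)
    (hmin : ∀ b : EuclideanSpace ℝ (Fin n),
      ∑ i ∈ Ψ, ‖β i - βhat‖ ≤ ∑ i ∈ Ψ, ‖β i - b‖) :
    ‖βhat - βstar‖ ≤ 5 * ε :=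
  drlr_recovery_general Ψ hne β βstar βhat ε hk hmin
end

section
/- Let Ψ⁺ be a nonempty finite index set with |Ψ⁺| = m̃, let β⁽ⁱ⁾ ∈ ℝ^p for each i ∈ Ψ⁺, let β* ∈ ℝ^p, and let ε ≥ 0. Suppose there exist an index e ∈ Ψ⁺ and a point β⁽ᵏ⁾ ∈ ℝ^p such that ‖β⁽ᵏ⁾ − β*‖₂ ≤ ε, ‖β⁽ᵏ⁾ − β⁽ⁱ⁾‖₂ ≤ 2ε for every i ∈ Ψ⁺ with i ≠ e, and ‖β⁽ᵏ⁾ − β⁽ᵉ⁾‖₂ ≤ 4ε. If β̂ ∈ ℝ^p is a robust consolidation of {β⁽ⁱ⁾ : i ∈ Ψ⁺}, i.e. Σ_{i∈Ψ⁺} ‖β⁽ⁱ⁾ − β̂‖₂ ≤ Σ_{i∈Ψ⁺} ‖β⁽ⁱ⁾ − β‖₂ for every β ∈ ℝ^p, then ‖β̂ − β*‖₂ ≤ 5ε + 4ε/m̃. -/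
/-- Theorem 3 (ORLR recovery property): with the new estimate `β⁽ᵉ⁾` possibly 4ε
away from the ε-accurate reference `β⁽ᵏ⁾` and all other estimates in `Ψ⁺` within
2ε of it, the robust consolidation satisfies `‖β̂ − β*‖₂ ≤ 5ε + 4ε/mt`. -/
theorem orlr_recovery {ι : Type*} [DecidableEq ι] (Ψplus : Finset ι) (mt : ℕ)
    (hcard : Ψplus.card = mt) (hne : Ψplus.Nonempty)
    {n : ℕ} (β : ι → EuclideanSpace ℝ (Fin n))
    (βstar βhat : EuclideanSpace ℝ (Fin n)) (ε : ℝ) (hε : 0 ≤ ε)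
    (hk : ∃ e ∈ Ψplus, ∃ βk : EuclideanSpace ℝ (Fin n),
      ‖βk - βstar‖ ≤ ε ∧ (∀ i ∈ Ψplus, i ≠ e → ‖βk - β i‖ ≤ 2 * ε) ∧
      ‖βk - β e‖ ≤ 4 * ε)
    (hmin : ∀ b : EuclideanSpace ℝ (Fin n),
      ∑ i ∈ Ψplus, ‖β i - βhat‖ ≤ ∑ i ∈ Ψplus, ‖β i - b‖) :
    ‖βhat - βstar‖ ≤ 5 * ε + 4 * ε / (mt : ℝ) := by
  obtain ⟨e, he, βk, hkstar, hother, hek⟩ := hk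
  have hm0 : 0 < mt := by
    have := Finset.card_pos.mpr hne
    omega
  have hmR : (0 : ℝ) < (mt : ℝ) := by exact_mod_cast hm0
  -- bound the objective value at βk
  have hS : ∑ i ∈ Ψplus, ‖β i - βk‖ ≤ 2 * ε * mt + 2 * ε := by
    rw [← Finset.add_sum_erase _ _ he]
    have h1 : ∑ i ∈ Ψplus.erase e, ‖β i - βk‖ ≤ (mt - 1 : ℕ) * (2 * ε) := by
      have := Finset.sum_le_card_nsmul (Ψplus.erase e) (fun i => ‖β i - βk‖)
        (2 * ε) (by
          intro i hi
          show ‖β i - βk‖ ≤ 2 * ε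
          rw [norm_sub_rev]
          exact hother i (Finset.mem_of_mem_erase hi) (Finset.ne_of_mem_erase hi))
      simpa [Finset.card_erase_of_mem he, hcard, nsmul_eq_mul] using this
    have h2 : ‖β e - βk‖ ≤ 4 * ε := by rw [norm_sub_rev]; exact hek
    have h3 : ((mt - 1 : ℕ) : ℝ) = (mt : ℝ) - 1 := by
      rw [Nat.cast_sub hm0]; simp
    nlinarith [h1, h2]
  have hhat : ∑ i ∈ Ψplus, ‖β i - βhat‖ ≤ 2 * ε * mt + 2 * ε :=
    le_trans (hmin βk) hS
  -- averaging: mt * ‖βhat - βk‖ ≤ sum of both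
  have hav : (mt : ℝ) * ‖βhat - βk‖ ≤ 4 * ε * mt + 4 * ε := by
    have hsum : ∑ _i ∈ Ψplus, ‖βhat - βk‖ ≤
        ∑ i ∈ Ψplus, (‖β i - βhat‖ + ‖β i - βk‖) := by
      apply Finset.sum_le_sum
      intro i _
      calc ‖βhat - βk‖ = ‖(βhat - β i) + (β i - βk)‖ := by
            rw [sub_add_sub_cancel]
        _ ≤ ‖βhat - β i‖ + ‖β i - βk‖ := norm_add_le _ _
        _ = ‖β i - βhat‖ + ‖β i - βk‖ := by rw [norm_sub_rev (βhat)]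
    rw [Finset.sum_const, hcard, nsmul_eq_mul, Finset.sum_add_distrib] at hsum
    nlinarith [hS, hhat]
  have hbk : ‖βhat - βk‖ ≤ 4 * ε + 4 * ε / mt := by
    rw [show 4 * ε + 4 * ε / (mt:ℝ) = (4 * ε * mt + 4 * ε) / mt by
      field_simp, le_div_iff₀ hmR]
    nlinarith [hav]
  calc ‖βhat - βstar‖ = ‖(βhat - βk) + (βk - βstar)‖ := by
        rw [sub_add_sub_cancel]
    _ ≤ ‖βhat - βk‖ + ‖βk - βstar‖ := norm_add_le _ _
    _ ≤ (4 * ε + 4 * ε / mt) + ε := add_le_add hbk hkstar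
    _ = 5 * ε + 4 * ε / mt := by ring
end

section
/- Let S be a nonempty finite index set, let β⁽ⁱ⁾ ∈ ℝ^p for each i ∈ S, and let β̂ ∈ ℝ^p satisfy Σ_{i∈S} ‖β⁽ⁱ⁾ − β̂‖₂ ≤ Σ_{i∈S} ‖β⁽ⁱ⁾ − β‖₂ for every β ∈ ℝ^p. Then for every point v ∈ ℝ^p, ‖β̂ − v‖₂ ≤ (2/|S|) · Σ_{i∈S} ‖β⁽ⁱ⁾ − v‖₂. -/
open Finset

theorem card_mul_dist_le_two_mul_sum_dist_s5 {α ι : Type*} [PseudoMetricSpace α] (S : Finset ι)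
    (x : ι → α) {m v : α} (hm : ∑ i ∈ S, dist (x i) m ≤ ∑ i ∈ S, dist (x i) v) :
    #S * dist m v ≤ 2 * ∑ i ∈ S, dist (x i) v :=
  calc #S * dist m v = ∑ _i ∈ S, dist m v := by rw [sum_const, nsmul_eq_mul]
    _ ≤ ∑ i ∈ S, (dist (x i) m + dist (x i) v) :=
        sum_le_sum fun i _ => dist_triangle_left m v (x i)
    _ = ∑ i ∈ S, dist (x i) m + ∑ i ∈ S, dist (x i) v := sum_add_distrib
    _ ≤ 2 * ∑ i ∈ S, dist (x i) v := by linarith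

/-- Key step of Theorem 3: the distance from the robust consolidation to any
reference point `v` is at most twice the average distance from the mini-batch
estimates to `v`. -/
theorem consolidation_twice_average {ι : Type*} (S : Finset ι) (hne : S.Nonempty)
    {n : ℕ} (β : ι → EuclideanSpace ℝ (Fin n)) (βhat : EuclideanSpace ℝ (Fin n))
    (hmin : ∀ b : EuclideanSpace ℝ (Fin n),
      ∑ i ∈ S, ‖β i - βhat‖ ≤ ∑ i ∈ S, ‖β i - b‖) :
    ∀ v : EuclideanSpace ℝ (Fin n),
      ‖βhat - v‖ ≤ (2 / (S.card : ℝ)) * ∑ i ∈ S, ‖β i - v‖ := by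
  intro v
  have hcard : (0 : ℝ) < #S := by exact_mod_cast hne.card_pos
  have key := card_mul_dist_le_two_mul_sum_dist_s5 S β (m := βhat) (v := v)
    (by simpa only [dist_eq_norm] using hmin v)
  simp only [dist_eq_norm] at key
  rw [div_mul_eq_mul_div, le_div_iff₀ hcard]
  linarith
end

section
/- Let S be a finite index set with |S| = m̃ ≥ 1, let β⁽ⁱ⁾ ∈ ℝ^p for each i ∈ S, let ε ≥ 0, and suppose there exist an index e ∈ S and a point β⁽ᵏ⁾ ∈ ℝ^p such that ‖β⁽ᵏ⁾ − β⁽ᵉ⁾‖₂ ≤ 4ε and ‖β⁽ᵏ⁾ − β⁽ⁱ⁾‖₂ ≤ 2ε for every i ∈ S with i ≠ e. If β̂ ∈ ℝ^p satisfies Σ_{i∈S} ‖β⁽ⁱ⁾ − β̂‖₂ ≤ Σ_{i∈S} ‖β⁽ⁱ⁾ − β‖₂ for every β ∈ ℝ^p, then ‖β̂ − β⁽ᵏ⁾‖₂ ≤ 4ε + 4ε/m̃. -/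
/-- Case `e ∈ Ψ⁺` of Theorem 3 (inequalities (c)–(e)): if one estimate `β⁽ᵉ⁾` is
within 4ε of `β⁽ᵏ⁾` and all others are within 2ε, the robust consolidation `β̂`
satisfies `‖β̂ − β⁽ᵏ⁾‖₂ ≤ 4ε + 4ε/mt`. -/
theorem consolidation_new_batch_case {ι : Type*} (S : Finset ι) (mt : ℕ)
    (hcard : S.card = mt) (hm : 1 ≤ mt)
    {n : ℕ} (β : ι → EuclideanSpace ℝ (Fin n))
    (βk βhat : EuclideanSpace ℝ (Fin n)) (ε : ℝ) (hε : 0 ≤ ε)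
    (he : ∃ e ∈ S, ‖βk - β e‖ ≤ 4 * ε ∧ ∀ i ∈ S, i ≠ e → ‖βk - β i‖ ≤ 2 * ε)
    (hmin : ∀ b : EuclideanSpace ℝ (Fin n),
      ∑ i ∈ S, ‖β i - βhat‖ ≤ ∑ i ∈ S, ‖β i - b‖) :
    ‖βhat - βk‖ ≤ 4 * ε + 4 * ε / (mt : ℝ) := by
  classical
  obtain ⟨e, heS, he4, hrest⟩ := he
  have hmpos : (0:ℝ) < mt := by exact_mod_cast hm
  -- bound on ∑ ‖β i - βk‖
  have hsum : ∑ i ∈ S, ‖β i - βk‖ ≤ 2 * ε * mt + 2 * ε := by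
    rw [← Finset.add_sum_erase S _ heS]
    have h1 : ‖β e - βk‖ ≤ 4 * ε := by rw [norm_sub_rev]; exact he4
    have h2 : ∑ i ∈ S.erase e, ‖β i - βk‖ ≤ (mt - 1) * (2 * ε) := by
      calc ∑ i ∈ S.erase e, ‖β i - βk‖
          ≤ ∑ _i ∈ S.erase e, (2 * ε) := by
            refine Finset.sum_le_sum fun i hi => ?_
            rw [norm_sub_rev]
            exact hrest i (Finset.mem_of_mem_erase hi) (Finset.ne_of_mem_erase hi)
        _ = ((S.erase e).card : ℝ) * (2 * ε) := by
            rw [Finset.sum_const, nsmul_eq_mul]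
        _ = (mt - 1) * (2 * ε) := by
            rw [Finset.card_erase_of_mem heS, hcard, Nat.cast_sub hm, Nat.cast_one]
    nlinarith [h1, h2]
  have hmin' := hmin βk
  have htri : (mt : ℝ) * ‖βhat - βk‖ ≤ ∑ i ∈ S, ‖β i - βhat‖ + ∑ i ∈ S, ‖β i - βk‖ := by
    rw [← Finset.sum_add_distrib]
    calc (mt : ℝ) * ‖βhat - βk‖ = ∑ _i ∈ S, ‖βhat - βk‖ := by
          rw [Finset.sum_const, nsmul_eq_mul, hcard]
      _ ≤ ∑ i ∈ S, (‖β i - βhat‖ + ‖β i - βk‖) := by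
          refine Finset.sum_le_sum fun i hi => ?_
          have := norm_sub_le_norm_sub_add_norm_sub βhat (β i) βk
          rw [norm_sub_rev βhat (β i)] at this
          linarith
  have key : (mt : ℝ) * ‖βhat - βk‖ ≤ 4 * ε * mt + 4 * ε := by nlinarith
  have := mul_le_mul_of_nonneg_right key (le_of_lt (inv_pos.mpr hmpos))
  rw [mul_comm (mt:ℝ), mul_assoc, mul_inv_cancel₀ (ne_of_gt hmpos), mul_one] at this
  calc ‖βhat - βk‖ ≤ (4 * ε * mt + 4 * ε) * (mt:ℝ)⁻¹ := this
    _ = 4 * ε + 4 * ε / mt := by field_simp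
end

section
/- Let m ≥ 1 and g ≥ 1 be natural numbers, let c₁, …, c_m be natural numbers with Σ_{i=1}^m cᵢ ≤ g·m/2, let β⁽¹⁾, …, β⁽ᵐ⁾ ∈ ℝ^p, β* ∈ ℝ^p, ε ≥ 0, and set m̃ = ⌊m/2⌋ + 1. Suppose every index i with cᵢ ≤ g satisfies ‖β⁽ⁱ⁾ − β*‖₂ ≤ ε. Let p ∈ {1,…,m} be a pivot index, meaning: for every i ∈ {1,…,m} and every t ∈ ℝ, if at least m̃ indices j satisfy ‖β⁽ⁱ⁾ − β⁽ʲ⁾‖₂ ≤ t, then at least m̃ indices j satisfy ‖β⁽ᵖ⁾ − β⁽ʲ⁾‖₂ ≤ t. Then at least m̃ indices j ∈ {1,…,m} satisfy ‖β⁽ᵖ⁾ − β⁽ʲ⁾‖₂ ≤ 2ε. -/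
/-- Combination of Lemma 1 and Lemma 2: under total corruption `∑ cᵢ ≤ g·m/2`
(stated as `2·∑ cᵢ ≤ g·m`), if every batch with `cᵢ ≤ g` yields an ε-accurate
estimate, then the pivot batch satisfies `σ_m̃(d⁽ᵖ⁾) ≤ 2ε`: at least
`m̃ = ⌊m/2⌋ + 1` indices j have `‖β⁽ᵖ⁾ − β⁽ʲ⁾‖₂ ≤ 2ε`. -/
theorem lemma1_lemma2_combined (m g : ℕ) (hm : 1 ≤ m) (hg : 1 ≤ g)
    (c : Fin m → ℕ) (hsum : 2 * ∑ i, c i ≤ g * m)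
    (n : ℕ) (β : Fin m → EuclideanSpace ℝ (Fin n))
    (βstar : EuclideanSpace ℝ (Fin n)) (ε : ℝ) (hε : 0 ≤ ε)
    (hacc : ∀ i : Fin m, c i ≤ g → ‖β i - βstar‖ ≤ ε)
    (piv : Fin m)
    (hpiv : ∀ (i : Fin m) (t : ℝ),
      m / 2 + 1 ≤ (Finset.univ.filter (fun j => ‖β i - β j‖ ≤ t)).card →
      m / 2 + 1 ≤ (Finset.univ.filter (fun j => ‖β piv - β j‖ ≤ t)).card) :
    m / 2 + 1 ≤ (Finset.univ.filter (fun j => ‖β piv - β j‖ ≤ 2 * ε)).card := by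
  classical
  set G : Finset (Fin m) := Finset.univ.filter (fun i => c i ≤ g) with hGdef
  set B : Finset (Fin m) := Finset.univ.filter (fun i => ¬ c i ≤ g) with hBdef
  have hcards : G.card + B.card = m := by
    rw [hGdef, hBdef, Finset.card_filter_add_card_filter_not]
    simp
  -- lower bound on sum via bad set
  have hBsum : (g + 1) * B.card ≤ ∑ i, c i := by
    calc (g + 1) * B.card = ∑ _i ∈ B, (g + 1) := by
          rw [Finset.sum_const, smul_eq_mul, mul_comm]
      _ ≤ ∑ i ∈ B, c i := by
          apply Finset.sum_le_sum
          intro i hi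
          rw [hBdef, Finset.mem_filter] at hi
          omega
      _ ≤ ∑ i, c i := Finset.sum_le_sum_of_subset (Finset.subset_univ B)
  have hBlt : 2 * B.card < m := by
    by_contra h
    push_neg at h
    have h1 : (g + 1) * m ≤ (g + 1) * (2 * B.card) := Nat.mul_le_mul_left _ h
    have h2 : (g + 1) * (2 * B.card) ≤ 2 * ∑ i, c i := by
      calc (g + 1) * (2 * B.card) = 2 * ((g + 1) * B.card) := by ring
        _ ≤ 2 * ∑ i, c i := Nat.mul_le_mul_left _ hBsum
    nlinarith
  have hGcard : m / 2 + 1 ≤ G.card := by omega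
  -- pick a good index
  have hGne : G.Nonempty := Finset.card_pos.mp (by omega)
  obtain ⟨i₀, hi₀⟩ := hGne
  have hi₀g : c i₀ ≤ g := by
    rw [hGdef, Finset.mem_filter] at hi₀; exact hi₀.2
  apply hpiv i₀ (2 * ε)
  refine le_trans hGcard (Finset.card_le_card ?_)
  intro j hj
  rw [hGdef, Finset.mem_filter] at hj
  rw [Finset.mem_filter]
  refine ⟨Finset.mem_univ j, ?_⟩
  have h1 := hacc i₀ hi₀g
  have h2 := hacc j hj.2
  calc ‖β i₀ - β j‖ = ‖(β i₀ - βstar) + (βstar - β j)‖ := by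
        rw [sub_add_sub_cancel]
    _ ≤ ‖β i₀ - βstar‖ + ‖βstar - β j‖ := norm_add_le _ _
    _ = ‖β i₀ - βstar‖ + ‖β j - βstar‖ := by rw [norm_sub_rev βstar (β j)]
    _ ≤ ε + ε := add_le_add h1 h2
    _ = 2 * ε := by ring
end

section
/- Let β⁽¹⁾, …, β⁽ᵐ⁾ ∈ ℝ^p, β* ∈ ℝ^p, ε ≥ 0, and set m̃ = ⌊m/2⌋ + 1. Suppose at least m̃ indices i satisfy ‖β⁽ⁱ⁾ − β*‖₂ ≤ ε. Let p ∈ {1,…,m} be a pivot index, meaning: for every i ∈ {1,…,m} and every t ∈ ℝ, if at least m̃ indices j satisfy ‖β⁽ⁱ⁾ − β⁽ʲ⁾‖₂ ≤ t, then at least m̃ indices j satisfy ‖β⁽ᵖ⁾ − β⁽ʲ⁾‖₂ ≤ t. Let Ψ ⊆ {1,…,m} be a dominating set for p, i.e. |Ψ| = m̃ and ‖β⁽ᵖ⁾ − β⁽ⁱ⁾‖₂ ≤ ‖β⁽ᵖ⁾ − β⁽ʲ⁾‖₂ for every i ∈ Ψ and every j ∉ Ψ. Then ‖β⁽ᵖ⁾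 − β⁽ⁱ⁾‖₂ ≤ 2ε for every i ∈ Ψ. -/
/-- Bridge used in Theorem 2: if at least `m̃ = ⌊m/2⌋ + 1` estimates are ε-accurate,
`piv` is a pivot index, and `Ψ` is a dominating set for `piv` (the `m̃` estimates
closest to `β⁽ᵖ⁾`), then every estimate in `Ψ` is within 2ε of the pivot estimate. -/
theorem dominating_set_close (m n : ℕ) (β : Fin m → EuclideanSpace ℝ (Fin n))
    (βstar : EuclideanSpace ℝ (Fin n)) (ε : ℝ) (hε : 0 ≤ ε)
    (hacc : m / 2 + 1 ≤ (Finset.univ.filter (fun i => ‖β i - βstar‖ ≤ ε)).card)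
    (piv : Fin m)
    (hpiv : ∀ (i : Fin m) (t : ℝ),
      m / 2 + 1 ≤ (Finset.univ.filter (fun j => ‖β i - β j‖ ≤ t)).card →
      m / 2 + 1 ≤ (Finset.univ.filter (fun j => ‖β piv - β j‖ ≤ t)).card)
    (Ψ : Finset (Fin m)) (hcard : Ψ.card = m / 2 + 1)
    (hdom : ∀ i ∈ Ψ, ∀ j ∉ Ψ, ‖β piv - β i‖ ≤ ‖β piv - β j‖) :
    ∀ i ∈ Ψ, ‖β piv - β i‖ ≤ 2 * ε := by
  set G := Finset.univ.filter (fun i => ‖β i - βstar‖ ≤ ε) with hG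
  have hGne : G.Nonempty := Finset.card_pos.mp (lt_of_lt_of_le (Nat.succ_pos _) hacc)
  obtain ⟨i₀, hi₀⟩ := hGne
  have hi₀acc : ‖β i₀ - βstar‖ ≤ ε := (Finset.mem_filter.mp hi₀).2
  -- all accurate indices are within 2ε of i₀
  have hsub : G ⊆ Finset.univ.filter (fun j => ‖β i₀ - β j‖ ≤ 2 * ε) := by
    intro j hj
    have hjacc : ‖β j - βstar‖ ≤ ε := (Finset.mem_filter.mp hj).2
    refine Finset.mem_filter.mpr ⟨Finset.mem_univ _, ?_⟩
    calc ‖β i₀ - β j‖ = ‖(β i₀ - βstar) - (β j - βstar)‖ := by abel_nf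
      _ ≤ ‖β i₀ - βstar‖ + ‖β j - βstar‖ := norm_sub_le _ _
      _ ≤ 2 * ε := by linarith
  have hkey := hpiv i₀ (2 * ε) (le_trans hacc (Finset.card_le_card hsub))
  set S := Finset.univ.filter (fun j => ‖β piv - β j‖ ≤ 2 * ε) with hS
  intro i hi
  by_cases hSΨ : S ⊆ Ψ
  · have : S = Ψ := Finset.eq_of_subset_of_card_le hSΨ (by omega)
    have := this ▸ hi
    exact (Finset.mem_filter.mp this).2
  · obtain ⟨j, hjS, hjΨ⟩ := Finset.not_subset.mp hSΨ
    exact le_trans (hdom i hi j hjΨ) (Finset.mem_filter.mp hjS).2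
end
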